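/- For every integer n ≥ 2 and all complex numbers b₁, …, bₙ, writing B = b₁ + ⋯ + bₙ, the following identity holds: ∏_{j=0}^{n−3} (B − 2 − j) + Σ_{s=2}^{n} (−1)^{s−1} (B − 1)^{s−2} Σ_{{J₁,…,J_s}} ∏_{j=1}^{s} f(b_{J_j} − 1, |J_j| + 1) = 0, where the inner sum runs over all partitions {J₁, …, J_s} of {1, …, n} into s nonempty pairwise disjoint blocks. -/

import Mathlib

open Finset

open scoped Classical

/-- The set of partitions of `{1, …, n}` (modeled as `Fin n`) into `s`
nonempty pairwise disjoint blocks, as a `Finset` of collections of blocks. -/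
noncomputable def partitionsInto (n s : ℕ) : Finset (Finset (Finset (Fin n))) :=
  Finset.univ.filter fun P => P.card = s ∧ (∀ J ∈ P, J.Nonempty) ∧
    (↑P : Set (Finset (Fin n))).PairwiseDisjoint id ∧ P.sup id = Finset.univ
section Dev

variable {α : Type*} [Fintype α] [DecidableEq α]

/-- falling factorial type product -/
noncomputable def fal (c : ℂ) (r : ℕ) : ℂ := ∏ j ∈ Finset.range r, (c - (j : ℂ))

lemma fal_succ (c : ℂ) (r : ℕ) : fal c (r + 1) = fal c r * (c - r) := by
  simp [fal, Finset.prod_range_succ]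

lemma fal_succ' (c : ℂ) (r : ℕ) : fal c (r + 1) = c * fal (c - 1) r := by
  rw [fal, Finset.prod_range_succ']
  simp only [Nat.cast_zero, sub_zero, fal]
  rw [mul_comm]
  congr 1
  refine Finset.prod_congr rfl fun j _ => ?_
  push_cast; ring

lemma fal_diff (c : ℂ) (r : ℕ) : fal (c + 1) r - fal c r = r * fal c (r - 1) := by
  cases r with
  | zero => simp [fal]
  | succ r =>
    rw [fal_succ' (c+1) r, fal_succ c r]
    simp only [add_sub_cancel_right, Nat.add_sub_cancel]
    push_cast; ring

noncomputable def parts (S : Finset α) : Finset (Finset (Finset α)) :=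
  Finset.univ.filter fun P => (∀ J ∈ P, J.Nonempty) ∧
    (↑P : Set (Finset α)).PairwiseDisjoint id ∧ P.sup id = S

lemma mem_parts {S : Finset α} {P : Finset (Finset α)} :
    P ∈ parts S ↔ (∀ J ∈ P, J.Nonempty) ∧
      (↑P : Set (Finset α)).PairwiseDisjoint id ∧ P.sup id = S := by
  simp [parts]

lemma block_subset {S : Finset α} {P : Finset (Finset α)} (hP : P ∈ parts S)
    {K : Finset α} (hK : K ∈ P) : K ⊆ S := by
  rw [mem_parts] at hP
  rw [← hP.2.2]
  exact Finset.le_sup (f := id) hK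

lemma block_eq_of_mem {S : Finset α} {P : Finset (Finset α)} (hP : P ∈ parts S)
    {K K' : Finset α} (hK : K ∈ P) (hK' : K' ∈ P) {x : α} (hx : x ∈ K) (hx' : x ∈ K') :
    K = K' := by
  rw [mem_parts] at hP
  by_contra hne
  have hd : Disjoint K K' := hP.2.1 (Finset.mem_coe.mpr hK) (Finset.mem_coe.mpr hK') hne
  exact (Finset.disjoint_left.mp hd) hx hx'

lemma exists_block {S : Finset α} {P : Finset (Finset α)} (hP : P ∈ parts S)
    {x : α} (hx : x ∈ S) : ∃ K ∈ P, x ∈ K := by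
  rw [mem_parts] at hP
  have := hP.2.2 ▸ hx
  rwa [Finset.mem_sup] at this

lemma erase_injOn {S : Finset α} {P : Finset (Finset α)} (hP : P ∈ parts S)
    {u v : α} (huv : u ≠ v) {K₀ : Finset α} (hK₀ : K₀ ∈ P) (hu : u ∈ K₀) (hv : v ∈ K₀) :
    ∀ K ∈ P, ∀ K' ∈ P, K.erase u = K'.erase u → K = K' := by
  intro K hK K' hK' h
  by_cases h1 : u ∈ K <;> by_cases h2 : u ∈ K'
  · rw [block_eq_of_mem hP hK hK₀ h1 hu, block_eq_of_mem hP hK' hK₀ h2 hu]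
  · -- u ∈ K, u ∉ K' : K = K₀ ∋ v, so v ∈ K.erase u = K'.erase u ⊆ K', so K' = K₀ ∋ u, contra
    exfalso
    have hKK₀ : K = K₀ := block_eq_of_mem hP hK hK₀ h1 hu
    have hvK : v ∈ K.erase u := Finset.mem_erase.mpr ⟨Ne.symm huv, hKK₀ ▸ hv⟩
    rw [h] at hvK
    have : K' = K₀ := block_eq_of_mem hP hK' hK₀ (Finset.mem_of_mem_erase hvK) hv
    exact h2 (this ▸ hu)
  · exfalso
    have hKK₀ : K' = K₀ := block_eq_of_mem hP hK' hK₀ h2 hu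
    have hvK : v ∈ K'.erase u := Finset.mem_erase.mpr ⟨Ne.symm huv, hKK₀ ▸ hv⟩
    rw [← h] at hvK
    have : K = K₀ := block_eq_of_mem hP hK hK₀ (Finset.mem_of_mem_erase hvK) hv
    exact h1 (this ▸ hu)
  · rwa [Finset.erase_eq_of_notMem h1, Finset.erase_eq_of_notMem h2] at h

/-- Bijection: partitions of `S` in which `u` and `v` share a block correspond to
partitions of `S.erase u`, by erasing `u` from its block. -/
lemma sum_erase_bij {S : Finset α} {u v : α} (hu : u ∈ S) (hv : v ∈ S) (huv : u ≠ v)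
    (f : Finset (Finset α) → ℂ) :
    ∑ P ∈ (parts S).filter (fun P => ∃ K ∈ P, u ∈ K ∧ v ∈ K),
        f (P.image (fun K => K.erase u)) =
      ∑ Q ∈ parts (S.erase u), f Q := by
  refine Finset.sum_nbij' (fun P => P.image (fun K => K.erase u))
    (fun Q => Q.image (fun K => if v ∈ K then insert u K else K)) ?_ ?_ ?_ ?_ ?_
  · -- image lands in parts (S.erase u)
    intro P hPf
    obtain ⟨hP, K₀, hK₀, huK₀, hvK₀⟩ := Finset.mem_filter.mp hPf
    rw [mem_parts]
    refine ⟨?_, ?_, ?_⟩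
    · intro J hJ
      obtain ⟨K, hK, rfl⟩ := Finset.mem_image.mp hJ
      by_cases h : u ∈ K
      · have : K = K₀ := block_eq_of_mem hP hK hK₀ h huK₀
        exact ⟨v, Finset.mem_erase.mpr ⟨Ne.symm huv, this ▸ hvK₀⟩⟩
      · rw [Finset.erase_eq_of_notMem h]
        exact (mem_parts.mp hP).1 K hK
    · intro a ha b hb hab
      obtain ⟨K, hK, rfl⟩ := Finset.mem_image.mp (Finset.mem_coe.mp ha)
      obtain ⟨K', hK', rfl⟩ := Finset.mem_image.mp (Finset.mem_coe.mp hb)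
      have hKK' : K ≠ K' := fun h => hab (by rw [h])
      have : Disjoint K K' := (mem_parts.mp hP).2.1 (Finset.mem_coe.mpr hK)
        (Finset.mem_coe.mpr hK') hKK'
      exact this.mono (Finset.erase_subset _ _) (Finset.erase_subset _ _)
    · ext z
      simp only [Finset.mem_sup, Finset.mem_image, id]
      constructor
      · rintro ⟨J, ⟨K, hK, rfl⟩, hz⟩
        exact Finset.mem_erase.mpr ⟨(Finset.mem_erase.mp hz).1,
          block_subset hP hK (Finset.mem_of_mem_erase hz)⟩
      · intro hz
        obtain ⟨zne, hzS⟩ := Finset.mem_erase.mp hz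
        obtain ⟨K, hK, hzK⟩ := exists_block hP hzS
        exact ⟨K.erase u, ⟨K, hK, rfl⟩, Finset.mem_erase.mpr ⟨zne, hzK⟩⟩
  · -- reverse map lands in the filtered set
    intro Q hQ
    have hvS' : v ∈ S.erase u := Finset.mem_erase.mpr ⟨Ne.symm huv, hv⟩
    obtain ⟨Kv, hKv, hvKv⟩ := exists_block hQ hvS'
    have hnotu : ∀ K ∈ Q, u ∉ K := fun K hK hu' =>
      (Finset.mem_erase.mp (block_subset hQ hK hu')).1 rfl
    rw [Finset.mem_filter]
    constructor
    · rw [mem_parts]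
      refine ⟨?_, ?_, ?_⟩
      · intro J hJ
        obtain ⟨K, hK, rfl⟩ := Finset.mem_image.mp hJ
        split_ifs
        · exact Finset.insert_nonempty _ _
        · exact (mem_parts.mp hQ).1 K hK
      · intro a ha b hb hab
        obtain ⟨K, hK, rfl⟩ := Finset.mem_image.mp (Finset.mem_coe.mp ha)
        obtain ⟨K', hK', rfl⟩ := Finset.mem_image.mp (Finset.mem_coe.mp hb)
        have hKK' : K ≠ K' := fun h => hab (by rw [h])
        have hdisj : Disjoint K K' := (mem_parts.mp hQ).2.1 (Finset.mem_coe.mpr hK)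
          (Finset.mem_coe.mpr hK') hKK'
        have hvone : ¬ (v ∈ K ∧ v ∈ K') := fun ⟨h1, h2⟩ =>
          hKK' (block_eq_of_mem hQ hK hK' h1 h2)
        show Disjoint (if v ∈ K then insert u K else K) (if v ∈ K' then insert u K' else K')
        split_ifs with h1 h2 h2
        · exact absurd ⟨h1, h2⟩ hvone
        · rw [Finset.disjoint_left]
          intro z hz
          rcases Finset.mem_insert.mp hz with rfl | hz'
          · exact hnotu K' hK'
          · exact Finset.disjoint_left.mp hdisj hz'
        · rw [Finset.disjoint_left]
          intro z hz hz'
          rcases Finset.mem_insert.mp hz' with h | h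
          · exact hnotu K hK (h ▸ hz)
          · exact Finset.disjoint_left.mp hdisj hz h
        · exact hdisj
      · ext z
        simp only [Finset.mem_sup, Finset.mem_image, id]
        constructor
        · rintro ⟨J, ⟨K, hK, rfl⟩, hz⟩
          have hKS : K ⊆ S.erase u := block_subset hQ hK
          by_cases hv' : v ∈ K
          · rw [if_pos hv'] at hz
            rcases Finset.mem_insert.mp hz with rfl | hz'
            · exact hu
            · exact Finset.mem_of_mem_erase (hKS hz')
          · rw [if_neg hv'] at hz
            exact Finset.mem_of_mem_erase (hKS hz)
        · intro hz
          by_cases hzu : z = u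
          · refine ⟨if v ∈ Kv then insert u Kv else Kv, ⟨Kv, hKv, rfl⟩, ?_⟩
            rw [if_pos hvKv]
            exact hzu ▸ Finset.mem_insert_self u Kv
          · obtain ⟨K, hK, hzK⟩ := exists_block hQ (Finset.mem_erase.mpr ⟨hzu, hz⟩)
            refine ⟨if v ∈ K then insert u K else K, ⟨K, hK, rfl⟩, ?_⟩
            split_ifs
            · exact Finset.mem_insert_of_mem hzK
            · exact hzK
    · refine ⟨insert u Kv, Finset.mem_image.mpr ⟨Kv, hKv, by rw [if_pos hvKv]⟩,
        Finset.mem_insert_self u Kv, Finset.mem_insert_of_mem hvKv⟩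
  · -- left inverse
    intro P hPf
    obtain ⟨hP, K₀, hK₀, huK₀, hvK₀⟩ := Finset.mem_filter.mp hPf
    rw [Finset.image_image]
    have : ∀ K ∈ P, ((fun K => if v ∈ K then insert u K else K) ∘ (fun K => K.erase u)) K
        = id K := by
      intro K hK
      simp only [Function.comp, id]
      by_cases h : u ∈ K
      · have hKeq : K = K₀ := block_eq_of_mem hP hK hK₀ h huK₀
        rw [if_pos (Finset.mem_erase.mpr ⟨Ne.symm huv, hKeq ▸ hvK₀⟩)]
        exact Finset.insert_erase h
      · rw [Finset.erase_eq_of_notMem h, if_neg]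
        intro hv'
        exact h ((block_eq_of_mem hP hK hK₀ hv' hvK₀) ▸ huK₀)
    rw [Finset.image_congr this, Finset.image_id]
  · -- right inverse
    intro Q hQ
    have hnotu : ∀ K ∈ Q, u ∉ K := fun K hK hu' =>
      (Finset.mem_erase.mp (block_subset hQ hK hu')).1 rfl
    rw [Finset.image_image]
    have : ∀ K ∈ Q, ((fun K => K.erase u) ∘ (fun K => if v ∈ K then insert u K else K)) K
        = id K := by
      intro K hK
      simp only [Function.comp, id]
      split_ifs
      · exact Finset.erase_insert (hnotu K hK)
      · exact Finset.erase_eq_of_notMem (hnotu K hK)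
    rw [Finset.image_congr this, Finset.image_id]
  · intro P _; rfl

/-- Bijection: partitions of `S` containing the singleton block `{x}` correspond to
partitions of `S.erase x`. -/
lemma sum_singleton_bij {S : Finset α} {x : α} (hx : x ∈ S)
    (f : Finset (Finset α) → ℂ) :
    ∑ P ∈ (parts S).filter (fun P => ({x} : Finset α) ∈ P), f (P.erase {x}) =
      ∑ Q ∈ parts (S.erase x), f Q := by
  refine Finset.sum_nbij' (fun P => P.erase {x}) (fun Q => insert {x} Q) ?_ ?_ ?_ ?_ ?_
  · intro P hPf
    obtain ⟨hP, hxP⟩ := Finset.mem_filter.mp hPf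
    rw [mem_parts]
    have hsub : (↑(P.erase {x}) : Set (Finset α)) ⊆ ↑P :=
      Finset.coe_subset.mpr (Finset.erase_subset _ _)
    refine ⟨fun J hJ => (mem_parts.mp hP).1 J (Finset.mem_of_mem_erase hJ),
      ((mem_parts.mp hP).2.1).subset hsub, ?_⟩
    ext z
    simp only [Finset.mem_sup, id]
    constructor
    · rintro ⟨K, hK, hzK⟩
      have hKP := Finset.mem_of_mem_erase hK
      refine Finset.mem_erase.mpr ⟨?_, block_subset hP hKP hzK⟩
      rintro rfl
      exact (Finset.mem_erase.mp hK).1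
        (block_eq_of_mem hP hKP hxP hzK (Finset.mem_singleton_self z))
    · intro hz
      obtain ⟨zne, hzS⟩ := Finset.mem_erase.mp hz
      obtain ⟨K, hK, hzK⟩ := exists_block hP hzS
      refine ⟨K, Finset.mem_erase.mpr ⟨?_, hK⟩, hzK⟩
      rintro rfl
      exact zne (Finset.mem_singleton.mp hzK)
  · intro Q hQ
    have hnotx : ∀ K ∈ Q, x ∉ K := fun K hK hx' =>
      (Finset.mem_erase.mp (block_subset hQ hK hx')).1 rfl
    rw [Finset.mem_filter]
    refine ⟨?_, Finset.mem_insert_self _ _⟩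
    rw [mem_parts]
    refine ⟨?_, ?_, ?_⟩
    · intro J hJ
      rcases Finset.mem_insert.mp hJ with rfl | hJ'
      · exact ⟨x, Finset.mem_singleton_self x⟩
      · exact (mem_parts.mp hQ).1 J hJ'
    · rw [Finset.coe_insert]
      refine ((mem_parts.mp hQ).2.1).insert ?_
      intro K hK _
      simp only [id]
      rw [Finset.disjoint_singleton_left]
      exact hnotx K (Finset.mem_coe.mp hK)
    · rw [Finset.sup_insert, (mem_parts.mp hQ).2.2]
      ext z
      simp only [id_eq, Finset.sup_eq_union, Finset.mem_union, Finset.mem_singleton,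
        Finset.mem_erase]
      constructor
      · rintro (rfl | ⟨_, hzS⟩)
        · exact hx
        · exact hzS
      · intro hzS
        by_cases hzx : z = x
        · exact Or.inl hzx
        · exact Or.inr ⟨hzx, hzS⟩
  · intro P hPf
    exact Finset.insert_erase (Finset.mem_filter.mp hPf).2
  · intro Q hQ
    refine Finset.erase_insert ?_
    intro hxQ
    have := block_subset hQ hxQ (Finset.mem_singleton_self x)
    exact (Finset.mem_erase.mp this).1 rfl
  · intro P _; rfl

noncomputable def wB (b : α → ℂ) (J : Finset α) : ℂ :=
  ∏ j ∈ Finset.range (J.card - 1), ((∑ i ∈ J, b i) - 1 - (j : ℂ))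

lemma wB_eq_fal (b : α → ℂ) (J : Finset α) : wB b J = fal ((∑ i ∈ J, b i) - 1) (J.card - 1) :=
  rfl

lemma wB_congr {b b' : α → ℂ} {J : Finset α} (h : ∀ i ∈ J, b i = b' i) : wB b J = wB b' J := by
  unfold wB; rw [Finset.sum_congr rfl h]

noncomputable def Esum (t : ℂ) (b : α → ℂ) (S : Finset α) : ℂ :=
  ∑ P ∈ parts S, t ^ P.card * ∏ J ∈ P, wB b J

lemma parts_singleton (x : α) : parts ({x} : Finset α) = {({({x} : Finset α)} : Finset (Finset α))} := by
  ext P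
  rw [mem_parts, Finset.mem_singleton]
  constructor
  · rintro ⟨hne, _, hsup⟩
    have hPne : P.Nonempty := by
      rcases P.eq_empty_or_nonempty with rfl | h
      · rw [Finset.sup_empty] at hsup
        exact absurd hsup (Ne.symm (Finset.singleton_ne_empty x))
      · exact h
    obtain ⟨K, hK⟩ := hPne
    have hall : ∀ K' ∈ P, K' = {x} := by
      intro K' hK'
      have hsub : K' ⊆ {x} := by
        rw [← hsup]; exact Finset.le_sup (f := id) hK'
      rcases Finset.subset_singleton_iff.mp hsub with rfl | h
      · exact absurd (hne _ hK') (by simp)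
      · exact h
    rw [Finset.eq_singleton_iff_unique_mem]
    exact ⟨(hall K hK) ▸ hK, hall⟩
  · rintro rfl
    exact ⟨fun J hJ => by simp at hJ; simp [hJ], by simp [Set.pairwiseDisjoint_singleton],
      by simp⟩

lemma not_mem_block_of_ne {S : Finset α} {P : Finset (Finset α)} (hP : P ∈ parts S)
    {K₀ K : Finset α} (hK₀ : K₀ ∈ P) (hK : K ∈ P) (hne : K ≠ K₀) {z : α} (hz : z ∈ K₀) :
    z ∉ K := fun hzK => hne (block_eq_of_mem hP hK hK₀ hzK hz)

lemma base_step {S : Finset α} {x : α} (hx : x ∈ S) (b : α → ℂ) (t : ℂ) :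
    Esum t (Function.update b x 0) S
      = (t + ∑ y ∈ S.erase x, (b y - 1)) * Esum t b (S.erase x) := by
  have hb0 : ∀ (K : Finset α), x ∉ K → wB (Function.update b x 0) K = wB b K :=
    fun K hK => wB_congr (fun i hi => Function.update_of_ne (fun h => hK (by rwa [h] at hi)) _ _)
  rw [Esum, ← Finset.sum_filter_add_sum_filter_not (parts S)
      (fun P => ({x} : Finset α) ∈ P)]
  have h1 : ∑ P ∈ (parts S).filter (fun P => ({x} : Finset α) ∈ P),
      t ^ P.card * ∏ J ∈ P, wB (Function.update b x 0) J = t * Esum t b (S.erase x) := by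
    have hcong : ∀ P ∈ (parts S).filter (fun P => ({x} : Finset α) ∈ P),
        t ^ P.card * ∏ J ∈ P, wB (Function.update b x 0) J
          = (fun Q => t ^ (Q.card + 1) * ∏ J ∈ Q, wB b J) (P.erase {x}) := by
      intro P hPf
      obtain ⟨hP, hxP⟩ := Finset.mem_filter.mp hPf
      have hcard : (P.erase {x}).card + 1 = P.card := Finset.card_erase_add_one hxP
      have hprod : ∏ J ∈ P, wB (Function.update b x 0) J
          = ∏ J ∈ P.erase {x}, wB b J := by
        rw [← Finset.mul_prod_erase P _ hxP]
        have hw1 : wB (Function.update b x 0) {x} = 1 := by simp [wB]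
        rw [hw1, one_mul]
        refine Finset.prod_congr rfl fun K hK => hb0 K fun hxK =>
          (Finset.mem_erase.mp hK).1 (block_eq_of_mem hP (Finset.mem_of_mem_erase hK) hxP
            hxK (Finset.mem_singleton_self x))
      dsimp only
      rw [hprod, hcard]
    rw [Finset.sum_congr rfl hcong]
    refine (sum_singleton_bij hx (fun Q => t ^ (Q.card + 1) * ∏ J ∈ Q, wB b J)).trans ?_
    rw [Esum, Finset.mul_sum]
    exact Finset.sum_congr rfl fun Q _ => by rw [pow_succ]; ring
  have h2 : ∑ P ∈ (parts S).filter (fun P => ¬({x} : Finset α) ∈ P),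
      t ^ P.card * ∏ J ∈ P, wB (Function.update b x 0) J
        = (∑ y ∈ S.erase x, (b y - 1)) * Esum t b (S.erase x) := by
    have hcong : ∀ P ∈ (parts S).filter (fun P => ¬({x} : Finset α) ∈ P),
        t ^ P.card * ∏ J ∈ P, wB (Function.update b x 0) J
          = ∑ y ∈ S.erase x, (if ∃ K ∈ P, x ∈ K ∧ y ∈ K then
              (b y - 1) * (t ^ (P.image fun K => K.erase x).card *
                ∏ J ∈ (P.image fun K => K.erase x), wB b J) else 0) := by
      intro P hPf
      obtain ⟨hP, hsing⟩ := Finset.mem_filter.mp hPf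
      obtain ⟨K₀, hK₀, hxK₀⟩ := exists_block hP hx
      have hK₀ne : K₀ ≠ {x} := fun h => hsing (h ▸ hK₀)
      have hJne : (K₀.erase x).Nonempty :=
        (Finset.erase_nonempty hxK₀).mpr
          ((Finset.nontrivial_iff_ne_singleton hxK₀).mpr hK₀ne)
      obtain ⟨y₀, hy₀⟩ := hJne
      have hy₀x : y₀ ≠ x := (Finset.mem_erase.mp hy₀).1
      have hy₀K : y₀ ∈ K₀ := Finset.mem_of_mem_erase hy₀
      have hinj : ∀ K ∈ P, ∀ K' ∈ P, K.erase x = K'.erase x → K = K' :=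
        erase_injOn hP (fun h => hy₀x h.symm) hK₀ hxK₀ hy₀K
      have hcardim : (P.image fun K => K.erase x).card = P.card :=
        Finset.card_image_of_injOn (fun K hK K' hK' h => hinj K hK K' hK' h)
      have hfilt : (S.erase x).filter (fun y => ∃ K ∈ P, x ∈ K ∧ y ∈ K) = K₀.erase x := by
        ext y
        simp only [Finset.mem_filter, Finset.mem_erase]
        constructor
        · rintro ⟨⟨hyx, _⟩, K, hK, hxK, hyK⟩
          exact ⟨hyx, (block_eq_of_mem hP hK hK₀ hxK hxK₀) ▸ hyK⟩
        · rintro ⟨hyx, hyK₀⟩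
          exact ⟨⟨hyx, block_subset hP hK₀ hyK₀⟩, K₀, hK₀, hxK₀, hyK₀⟩
      rw [← Finset.sum_filter, hfilt]
      have hxnot : ∀ K ∈ P.erase K₀, x ∉ K := fun K hK =>
        not_mem_block_of_ne hP hK₀ (Finset.mem_of_mem_erase hK)
          (Finset.ne_of_mem_erase hK) hxK₀
      have himprod : ∏ J ∈ (P.image fun K => K.erase x), wB b J
          = wB b (K₀.erase x) * ∏ K ∈ P.erase K₀, wB b K := by
        rw [Finset.prod_image hinj, ← Finset.mul_prod_erase P (fun K => wB b (K.erase x)) hK₀]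
        congr 1
        exact Finset.prod_congr rfl fun K hK => by
          rw [Finset.erase_eq_of_notMem (hxnot K hK)]
      have hK₀w : wB (Function.update b x 0) K₀
          = (∑ y ∈ K₀.erase x, (b y - 1)) * wB b (K₀.erase x) := by
        obtain ⟨r, hr⟩ : ∃ r, (K₀.erase x).card = r + 1 :=
          ⟨(K₀.erase x).card - 1, (Nat.succ_pred_eq_of_pos
            (Finset.card_pos.mpr ⟨y₀, hy₀⟩)).symm⟩
        have hsum : ∑ i ∈ K₀, Function.update b x 0 i = ∑ i ∈ K₀.erase x, b i := by
          rw [Finset.sum_update_of_mem hxK₀, zero_add, ← Finset.erase_eq]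
        have hcardK₀ : K₀.card - 1 = r + 1 := by
          rw [← hr, Finset.card_erase_of_mem hxK₀]
        rw [wB_eq_fal, wB_eq_fal, hsum, hcardK₀, hr, fal_succ]
        have : ∑ y ∈ K₀.erase x, (b y - 1) = (∑ i ∈ K₀.erase x, b i) - 1 - (r : ℂ) := by
          rw [Finset.sum_sub_distrib, Finset.sum_const, hr]
          push_cast
          ring
        rw [Nat.add_sub_cancel, this]
        ring
      rw [← Finset.mul_prod_erase P _ hK₀,
        Finset.prod_congr rfl (fun K hK => hb0 K (hxnot K hK)), hK₀w, himprod, hcardim,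
        ← Finset.sum_mul]
      ring
    rw [Finset.sum_congr rfl hcong, Finset.sum_comm, Finset.sum_mul]
    refine Finset.sum_congr rfl fun y hy => ?_
    obtain ⟨hyx, hyS⟩ := Finset.mem_erase.mp hy
    rw [← Finset.sum_filter]
    have hAB : ((parts S).filter (fun P => ¬({x} : Finset α) ∈ P)).filter
        (fun P => ∃ K ∈ P, x ∈ K ∧ y ∈ K)
          = (parts S).filter (fun P => ∃ K ∈ P, x ∈ K ∧ y ∈ K) := by
      rw [Finset.filter_filter]
      refine Finset.filter_congr fun P hP => ?_
      constructor
      · exact fun h => h.2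
      · rintro ⟨K, hK, hxK, hyK⟩
        refine ⟨fun hsing => ?_, K, hK, hxK, hyK⟩
        have : K = {x} := block_eq_of_mem hP hK hsing hxK (Finset.mem_singleton_self x)
        rw [this] at hyK
        exact hyx (Finset.mem_singleton.mp hyK)
    rw [hAB]
    refine Eq.trans (b := ∑ Q ∈ parts (S.erase x), (b y - 1) * (t ^ Q.card * ∏ J ∈ Q, wB b J)) ?_ ?_
    · exact sum_erase_bij (u := x) (v := y) hx hyS (fun h => hyx h.symm)
        (fun Q => (b y - 1) * (t ^ Q.card * ∏ J ∈ Q, wB b J))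
    · rw [← Finset.mul_sum, Esum]
  rw [h1, h2]
  ring

lemma step_eq {S : Finset α} {x : α} (hx : x ∈ S) (b : α → ℂ) (t : ℂ) (β : ℂ) :
    Esum t (Function.update b x (β + 1)) S
      = Esum t (Function.update b x β) S
        + ∑ y ∈ S.erase x, Esum t (Function.update b x (β + b y)) (S.erase y) := by
  have hupd : ∀ (γ : ℂ) (K : Finset α), x ∉ K → wB (Function.update b x γ) K = wB b K :=
    fun γ K hK => wB_congr (fun i hi =>
      Function.update_of_ne (fun h => hK (by rwa [h] at hi)) _ _)
  have main : Esum t (Function.update b x (β + 1)) S - Esum t (Function.update b x β) S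
      = ∑ y ∈ S.erase x, Esum t (Function.update b x (β + b y)) (S.erase y) := by
    rw [Esum, Esum, ← Finset.sum_sub_distrib]
    have hcong : ∀ P ∈ parts S,
        (t ^ P.card * ∏ J ∈ P, wB (Function.update b x (β + 1)) J
          - t ^ P.card * ∏ J ∈ P, wB (Function.update b x β) J)
        = ∑ y ∈ S.erase x, (if ∃ K ∈ P, y ∈ K ∧ x ∈ K then
            (fun Q => t ^ Q.card * ∏ J ∈ Q, wB (Function.update b x (β + b y)) J)
              (P.image fun K => K.erase y) else 0) := by
      intro P hP
      obtain ⟨K₀, hK₀, hxK₀⟩ := exists_block hP hx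
      have hfilt : (S.erase x).filter (fun y => ∃ K ∈ P, y ∈ K ∧ x ∈ K) = K₀.erase x := by
        ext y
        simp only [Finset.mem_filter, Finset.mem_erase]
        constructor
        · rintro ⟨⟨hyx, _⟩, K, hK, hyK, hxK⟩
          exact ⟨hyx, (block_eq_of_mem hP hK hK₀ hxK hxK₀) ▸ hyK⟩
        · rintro ⟨hyx, hyK₀⟩
          exact ⟨⟨hyx, block_subset hP hK₀ hyK₀⟩, K₀, hK₀, hyK₀, hxK₀⟩
      rw [← Finset.sum_filter, hfilt]
      have hxnot : ∀ K ∈ P.erase K₀, x ∉ K := fun K hK =>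
        not_mem_block_of_ne hP hK₀ (Finset.mem_of_mem_erase hK)
          (Finset.ne_of_mem_erase hK) hxK₀
      have hrest1 : ∏ K ∈ P.erase K₀, wB (Function.update b x (β + 1)) K
          = ∏ K ∈ P.erase K₀, wB b K :=
        Finset.prod_congr rfl fun K hK => hupd _ K (hxnot K hK)
      have hrest2 : ∏ K ∈ P.erase K₀, wB (Function.update b x β) K
          = ∏ K ∈ P.erase K₀, wB b K :=
        Finset.prod_congr rfl fun K hK => hupd _ K (hxnot K hK)
      rw [← Finset.mul_prod_erase P (wB (Function.update b x (β + 1))) hK₀,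
        ← Finset.mul_prod_erase P (wB (Function.update b x β)) hK₀, hrest1, hrest2]
      set c : ℂ := (β + ∑ i ∈ K₀.erase x, b i) - 1 with hc
      have hsum1 : ∑ i ∈ K₀, Function.update b x (β + 1) i
          = (β + 1) + ∑ i ∈ K₀.erase x, b i := by
        rw [Finset.sum_update_of_mem hxK₀, ← Finset.erase_eq]
      have hsumβ : ∑ i ∈ K₀, Function.update b x β i
          = β + ∑ i ∈ K₀.erase x, b i := by
        rw [Finset.sum_update_of_mem hxK₀, ← Finset.erase_eq]
      have hw1 : wB (Function.update b x (β + 1)) K₀ = fal (c + 1) (K₀.card - 1) := by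
        rw [wB_eq_fal, hsum1, hc]; ring_nf
      have hwβ : wB (Function.update b x β) K₀ = fal c (K₀.card - 1) := by
        rw [wB_eq_fal, hsumβ, hc]
      have h11 : K₀.card - 1 - 1 = K₀.card - 2 := by omega
      have hdiff : wB (Function.update b x (β + 1)) K₀ - wB (Function.update b x β) K₀
          = (((K₀.erase x).card : ℕ) : ℂ) * fal c (K₀.card - 2) := by
        rw [hw1, hwβ, fal_diff, h11, Finset.card_erase_of_mem hxK₀]
      -- per y identification
      have hyterm : ∀ y ∈ K₀.erase x,
          (fun Q => t ^ Q.card * ∏ J ∈ Q, wB (Function.update b x (β + b y)) J)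
              (P.image fun K => K.erase y)
            = t ^ P.card * (fal c (K₀.card - 2) * ∏ K ∈ P.erase K₀, wB b K) := by
        intro y hy
        obtain ⟨hyx, hyK₀⟩ := Finset.mem_erase.mp hy
        have hinj : ∀ K ∈ P, ∀ K' ∈ P, K.erase y = K'.erase y → K = K' :=
          erase_injOn hP hyx hK₀ hyK₀ hxK₀
        have hynot : ∀ K ∈ P.erase K₀, y ∉ K := fun K hK =>
          not_mem_block_of_ne hP hK₀ (Finset.mem_of_mem_erase hK)
            (Finset.ne_of_mem_erase hK) hyK₀
        have hcardim : (P.image fun K => K.erase y).card = P.card :=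
          Finset.card_image_of_injOn (fun K hK K' hK' h => hinj K hK K' hK' h)
        have hwy : wB (Function.update b x (β + b y)) (K₀.erase y)
            = fal c (K₀.card - 2) := by
          have hxKy : x ∈ K₀.erase y := Finset.mem_erase.mpr ⟨fun h => hyx h.symm, hxK₀⟩
          have hee : (K₀.erase y).erase x = (K₀.erase x).erase y := by
            ext z
            simp only [Finset.mem_erase]
            tauto
          have hsy : ∑ i ∈ K₀.erase y, Function.update b x (β + b y) i
              = β + ∑ i ∈ K₀.erase x, b i := by
            rw [Finset.sum_update_of_mem hxKy, ← Finset.erase_eq, hee,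
              ← Finset.add_sum_erase _ b hy]
            ring
          have hcy : (K₀.erase y).card - 1 = K₀.card - 2 := by
            rw [Finset.card_erase_of_mem hyK₀]
            omega
          rw [wB_eq_fal, hsy, hcy, hc]
        have himprod : ∏ J ∈ (P.image fun K => K.erase y),
            wB (Function.update b x (β + b y)) J
              = fal c (K₀.card - 2) * ∏ K ∈ P.erase K₀, wB b K := by
          rw [Finset.prod_image hinj,
            ← Finset.mul_prod_erase P
              (fun K => wB (Function.update b x (β + b y)) (K.erase y)) hK₀]
          rw [hwy]
          congr 1
          refine Finset.prod_congr rfl fun K hK => ?_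
          rw [Finset.erase_eq_of_notMem (hynot K hK)]
          exact hupd _ K (hxnot K hK)
        dsimp only
        rw [hcardim, himprod]
      rw [Finset.sum_congr rfl hyterm, Finset.sum_const, nsmul_eq_mul]
      linear_combination (t ^ P.card * ∏ K ∈ P.erase K₀, wB b K) * hdiff
    rw [Finset.sum_congr rfl hcong, Finset.sum_comm]
    refine Finset.sum_congr rfl fun y hy => ?_
    obtain ⟨hyx, hyS⟩ := Finset.mem_erase.mp hy
    rw [← Finset.sum_filter]
    refine Eq.trans (b := ∑ Q ∈ parts (S.erase y),
        t ^ Q.card * ∏ J ∈ Q, wB (Function.update b x (β + b y)) J) ?_ ?_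
    · exact sum_erase_bij (u := y) (v := x) hyS hx hyx
        (fun Q => t ^ Q.card * ∏ J ∈ Q, wB (Function.update b x (β + b y)) J)
    · rw [Esum]
  rw [← main]
  ring

lemma parts_card_le {S : Finset α} {P : Finset (Finset α)} (hP : P ∈ parts S) :
    P.card ≤ S.card := by
  obtain ⟨hne, hdisj, hsup⟩ := mem_parts.mp hP
  have hbi : S = P.biUnion id := by
    rw [← hsup, Finset.sup_eq_biUnion]
  have hcard : S.card = ∑ K ∈ P, K.card := by
    rw [hbi, Finset.card_biUnion (fun K hK K' hK' hne' =>
      hdisj (Finset.mem_coe.mpr hK) (Finset.mem_coe.mpr hK') hne')]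
    exact Finset.sum_congr rfl fun K _ => rfl
  calc P.card = ∑ _K ∈ P, 1 := by rw [Finset.sum_const, smul_eq_mul, mul_one]
    _ ≤ ∑ K ∈ P, K.card := Finset.sum_le_sum fun K hK => Finset.card_pos.mpr (hne K hK)
    _ = S.card := hcard.symm

theorem master : ∀ (m : ℕ) (S : Finset α), S.card = m → S.Nonempty → ∀ (b : α → ℂ) (t : ℂ),
    Esum t b S = t * fal (t + (∑ i ∈ S, b i) - 1) (S.card - 1) := by
  intro m
  induction m using Nat.strong_induction_on with
  | _ m IH =>
  intro S hSm hSne b t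
  obtain ⟨x, hx⟩ := hSne
  by_cases hm2 : m < 2
  · have h1 : S.card = 1 := by
      have := Finset.card_pos.mpr ⟨x, hx⟩
      omega
    obtain ⟨z, rfl⟩ := Finset.card_eq_one.mp h1
    rw [Esum, parts_singleton, Finset.sum_singleton]
    simp [wB, fal]
  · push_neg at hm2
    obtain ⟨m2, rfl⟩ : ∃ m2, m = m2 + 2 := ⟨m - 2, by omega⟩
    have hS'card : (S.erase x).card = m2 + 1 := by
      rw [Finset.card_erase_of_mem hx, hSm]
      omega
    have hS'ne : (S.erase x).Nonempty := Finset.card_pos.mp (by rw [hS'card]; omega)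
    have IH' : Esum t b (S.erase x)
        = t * fal (t + (∑ i ∈ S.erase x, b i) - 1) m2 := by
      have := IH (m2 + 1) (by omega) (S.erase x) hS'card hS'ne b t
      rwa [hS'card, Nat.add_sub_cancel] at this
    have key : ∀ k : ℕ, Esum t (Function.update b x (k : ℂ)) S
        = t * fal (t + ((k : ℂ) + ∑ i ∈ S.erase x, b i) - 1) (m2 + 1) := by
      intro k
      induction k with
      | zero =>
        rw [Nat.cast_zero, base_step hx b t, IH']
        have hsum : ∑ y ∈ S.erase x, (b y - 1)
            = (∑ i ∈ S.erase x, b i) - ((m2 : ℂ) + 1) := by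
          rw [Finset.sum_sub_distrib, Finset.sum_const, hS'card, nsmul_eq_mul, mul_one]
          push_cast
          ring
        rw [hsum, fal_succ]
        push_cast
        ring
      | succ k ihk =>
        have hstep := step_eq hx b t (k : ℂ)
        have hy' : ∀ y ∈ S.erase x, Esum t (Function.update b x ((k : ℂ) + b y)) (S.erase y)
            = t * fal (t + ((k : ℂ) + ∑ i ∈ S.erase x, b i) - 1) m2 := by
          intro y hy
          obtain ⟨hyx, hyS⟩ := Finset.mem_erase.mp hy
          have hcard : (S.erase y).card = m2 + 1 := by
            rw [Finset.card_erase_of_mem hyS, hSm]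
            omega
          have hxSy : x ∈ S.erase y := Finset.mem_erase.mpr ⟨fun h => hyx h.symm, hx⟩
          have hne : (S.erase y).Nonempty := ⟨x, hxSy⟩
          have hIHy := IH (m2 + 1) (by omega) (S.erase y) hcard hne
            (Function.update b x ((k : ℂ) + b y)) t
          rw [hcard, Nat.add_sub_cancel] at hIHy
          rw [hIHy]
          congr 2
          rw [Finset.sum_update_of_mem hxSy, ← Finset.erase_eq]
          have hee : (S.erase y).erase x = (S.erase x).erase y := by
            ext z
            simp only [Finset.mem_erase]
            tauto
          rw [hee]
          have hbe : b y + ∑ i ∈ (S.erase x).erase y, b i = ∑ i ∈ S.erase x, b i :=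
            Finset.add_sum_erase _ b hy
          linear_combination hbe
        rw [Nat.cast_succ, hstep, ihk, Finset.sum_congr rfl hy', Finset.sum_const,
          hS'card, nsmul_eq_mul]
        have hfd := fal_diff (t + ((k : ℂ) + ∑ i ∈ S.erase x, b i) - 1) (m2 + 1)
        rw [Nat.add_sub_cancel] at hfd
        have harg : t + ((k : ℂ) + 1 + ∑ i ∈ S.erase x, b i) - 1
            = (t + ((k : ℂ) + ∑ i ∈ S.erase x, b i) - 1) + 1 := by ring
        rw [harg]
        push_cast
        push_cast at hfd
        linear_combination (-t) * hfd
    -- polynomial extension from naturals to all of ℂ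
    set F : Polynomial ℂ := ∑ P ∈ parts S, (Polynomial.C t) ^ P.card *
        ∏ K ∈ P, ∏ j ∈ Finset.range (K.card - 1),
          (if x ∈ K then Polynomial.X + Polynomial.C ((∑ i ∈ K.erase x, b i) - 1 - (j : ℂ))
           else Polynomial.C ((∑ i ∈ K, b i) - 1 - (j : ℂ))) with hF
    have hFeval : ∀ β : ℂ, F.eval β = Esum t (Function.update b x β) S := by
      intro β
      rw [hF, Polynomial.eval_finset_sum, Esum]
      refine Finset.sum_congr rfl fun P hP => ?_
      rw [Polynomial.eval_mul, Polynomial.eval_pow, Polynomial.eval_C, Polynomial.eval_prod]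
      congr 1
      refine Finset.prod_congr rfl fun K hK => ?_
      rw [Polynomial.eval_prod, wB]
      refine Finset.prod_congr rfl fun j hj => ?_
      by_cases hxK : x ∈ K
      · rw [if_pos hxK, Polynomial.eval_add, Polynomial.eval_X, Polynomial.eval_C,
          Finset.sum_update_of_mem hxK, ← Finset.erase_eq]
        ring
      · rw [if_neg hxK, Polynomial.eval_C]
        have : ∑ i ∈ K, Function.update b x β i = ∑ i ∈ K, b i :=
          Finset.sum_congr rfl (fun i hi =>
            Function.update_of_ne (fun h => hxK (by rwa [h] at hi)) _ _)
        rw [this]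
    set G : Polynomial ℂ := Polynomial.C t *
        ∏ j ∈ Finset.range (m2 + 1),
          (Polynomial.X + Polynomial.C (t + (∑ i ∈ S.erase x, b i) - 1 - (j : ℂ))) with hG
    have hGeval : ∀ β : ℂ,
        G.eval β = t * fal (t + (β + ∑ i ∈ S.erase x, b i) - 1) (m2 + 1) := by
      intro β
      rw [hG, Polynomial.eval_mul, Polynomial.eval_C, Polynomial.eval_prod, fal]
      congr 1
      refine Finset.prod_congr rfl fun j hj => ?_
      rw [Polynomial.eval_add, Polynomial.eval_X, Polynomial.eval_C]
      ring
    have hFG : F = G := by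
      refine Polynomial.eq_of_infinite_eval_eq F G ?_
      refine Set.Infinite.mono ?_ (Set.infinite_range_of_injective
        (Nat.cast_injective : Function.Injective (fun k : ℕ => (k : ℂ))))
      rintro β ⟨k, rfl⟩
      show F.eval _ = G.eval _
      rw [hFeval, hGeval, key k]
    have hfinal := hFeval (b x)
    rw [hFG, hGeval, Function.update_eq_self] at hfinal
    have hbs : b x + ∑ i ∈ S.erase x, b i = ∑ i ∈ S, b i := Finset.add_sum_erase _ b hx
    have hc : (m2 + 2) - 1 = m2 + 1 := by omega
    rw [hSm, hc, ← hbs, hfinal]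

end Dev

set_option maxHeartbeats 1600000 in
/-- Lemma 5.2 (the combinatorial identity expressing `N(μ, 0) = 0`): for all
complex `b₁, …, bₙ` with `B = ∑ bᵢ`,
`∏_{j=0}^{n-3}(B - 2 - j) + ∑_{s=2}^{n} (-1)^{s-1}(B-1)^{s-2}
∑_{{J₁,…,J_s}} ∏_j f(b_{J_j} - 1, |J_j| + 1) = 0`, the inner sum over all
partitions of `{1, …, n}` into `s` nonempty blocks, where
`f(x, m) = ∏_{j=0}^{m-3}(x - j)`. -/
theorem partition_identity_zero (n : ℕ) (hn : 2 ≤ n) (b : Fin n → ℂ) :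
    (∏ j ∈ Finset.range (n - 2), ((∑ i, b i) - 2 - (j : ℂ))) +
      ∑ s ∈ Finset.Icc 2 n,
        (-1 : ℂ) ^ (s - 1) * ((∑ i, b i) - 1) ^ (s - 2) *
          ∑ P ∈ partitionsInto n s,
            ∏ J ∈ P,
              ∏ j ∈ Finset.range (J.card - 1),
                ((∑ i ∈ J, b i) - 1 - (j : ℂ)) = 0 := by
  obtain ⟨n2, rfl⟩ : ∃ n2, n = n2 + 2 := ⟨n - 2, by omega⟩
  set B : ℂ := ∑ i, b i with hB
  have huniv_card : (Finset.univ : Finset (Fin (n2 + 2))).card = n2 + 2 := by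
    rw [Finset.card_univ, Fintype.card_fin]
  have huniv_ne : (Finset.univ : Finset (Fin (n2 + 2))).Nonempty :=
    ⟨⟨0, by omega⟩, Finset.mem_univ _⟩
  -- partitionsInto as a filtered version of parts
  have hbridge : ∀ s : ℕ, partitionsInto (n2 + 2) s
      = (parts (Finset.univ : Finset (Fin (n2 + 2)))).filter (fun P => P.card = s) := by
    intro s
    ext P
    simp only [partitionsInto, parts, Finset.mem_filter, Finset.mem_univ, true_and]
    tauto
  set A : ℕ → ℂ := fun s => ∑ P ∈ partitionsInto (n2 + 2) s, ∏ J ∈ P, wB b J with hA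
  -- the master identity, fiberwise by number of blocks
  have funcid : ∀ t : ℂ, ∑ s ∈ Finset.range (n2 + 3), t ^ s * A s
      = t * fal (t + B - 1) (n2 + 1) := by
    intro t
    have hmaster := master (n2 + 2) (Finset.univ : Finset (Fin (n2 + 2))) huniv_card huniv_ne b t
    rw [huniv_card] at hmaster
    have hm1 : n2 + 2 - 1 = n2 + 1 := by omega
    rw [hm1] at hmaster
    rw [← hB] at hmaster
    rw [← hmaster, Esum]
    rw [← Finset.sum_fiberwise_of_maps_to (g := fun P => P.card)
      (t := Finset.range (n2 + 3))
      (fun P hP => Finset.mem_range.mpr (Nat.lt_succ_of_le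
        (le_trans (parts_card_le hP) (le_of_eq huniv_card))))
      (fun P => t ^ P.card * ∏ J ∈ P, wB b J)]
    refine Finset.sum_congr rfl fun s _ => ?_
    rw [hA]
    dsimp only
    rw [hbridge s, Finset.mul_sum]
    exact Finset.sum_congr rfl fun P hP => by
      rw [(Finset.mem_filter.mp hP).2]
  have hA0 : A 0 = 0 := by
    have : partitionsInto (n2 + 2) 0 = ∅ := by
      ext P
      simp only [partitionsInto, Finset.mem_filter, Finset.mem_univ, true_and,
        Finset.notMem_empty, iff_false]
      rintro ⟨hc, _, _, hsup⟩
      rw [Finset.card_eq_zero.mp hc, Finset.sup_empty] at hsup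
      exact huniv_ne.ne_empty hsup.symm
    rw [hA]
    simp [this]
  have hA1 : A 1 = fal (B - 1) (n2 + 1) := by
    have hp1 : partitionsInto (n2 + 2) 1 = {({(Finset.univ : Finset (Fin (n2 + 2)))} : Finset (Finset (Fin (n2 + 2))))} := by
      ext P
      simp only [partitionsInto, Finset.mem_filter, Finset.mem_univ, true_and,
        Finset.mem_singleton]
      constructor
      · rintro ⟨hc, hne, hdisj, hsup⟩
        obtain ⟨K, rfl⟩ := Finset.card_eq_one.mp hc
        rw [Finset.sup_singleton] at hsup
        rw [show K = Finset.univ from hsup]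
      · rintro rfl
        exact ⟨Finset.card_singleton _, fun J hJ => by
            rw [Finset.mem_singleton.mp hJ]; exact huniv_ne,
          by simp [Set.pairwiseDisjoint_singleton], by simp⟩
    rw [hA]
    dsimp only
    rw [hp1, Finset.sum_singleton, Finset.prod_singleton, wB_eq_fal, huniv_card, ← hB]
    norm_num
  -- polynomial identities
  set QP : Polynomial ℂ := ∏ j ∈ Finset.range n2,
    (Polynomial.X + Polynomial.C (B - 2 - (j : ℂ))) with hQP
  set GQ : Polynomial ℂ := ∑ s ∈ Finset.Icc 2 (n2 + 2),
    Polynomial.X ^ (s - 2) * Polynomial.C (A s) with hGQ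
  set FP : Polynomial ℂ := ∑ s ∈ Finset.range (n2 + 3),
    Polynomial.X ^ s * Polynomial.C (A s) with hFP
  set GP : Polynomial ℂ := Polynomial.X * ∏ j ∈ Finset.range (n2 + 1),
    (Polynomial.X + Polynomial.C (B - 1 - (j : ℂ))) with hGP
  have hFPeval : ∀ t : ℂ, FP.eval t = ∑ s ∈ Finset.range (n2 + 3), t ^ s * A s := by
    intro t
    rw [hFP, Polynomial.eval_finset_sum]
    exact Finset.sum_congr rfl fun s _ => by
      rw [Polynomial.eval_mul, Polynomial.eval_pow, Polynomial.eval_X, Polynomial.eval_C]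
  have hGPeval : ∀ t : ℂ, GP.eval t = t * fal (t + B - 1) (n2 + 1) := by
    intro t
    rw [hGP, Polynomial.eval_mul, Polynomial.eval_X, Polynomial.eval_prod, fal]
    congr 1
    exact Finset.prod_congr rfl fun j _ => by
      rw [Polynomial.eval_add, Polynomial.eval_X, Polynomial.eval_C]
      ring
  have hFG : FP = GP := by
    refine Polynomial.eq_of_infinite_eval_eq FP GP ?_
    refine Set.Infinite.mono (fun u _ => ?_) Set.infinite_univ
    show FP.eval u = GP.eval u
    rw [hFPeval, hGPeval, funcid]
  -- peel off the first factor of GP's product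
  have hGPsplit : GP = Polynomial.X * (QP * (Polynomial.X + Polynomial.C (B - 1))) := by
    rw [hGP, hQP, Finset.prod_range_succ']
    congr 2
    · refine Finset.prod_congr rfl fun j _ => ?_
      push_cast
      ring
    · norm_num
  -- split FP
  have hFPsplit : FP = Polynomial.X * Polynomial.C (A 1) + Polynomial.X ^ 2 * GQ := by
    have hins : Finset.range (n2 + 3) = insert 0 (insert 1 (Finset.Icc 2 (n2 + 2))) := by
      ext s
      simp only [Finset.mem_range, Finset.mem_insert, Finset.mem_Icc]
      omega
    rw [hFP, hins, Finset.sum_insert (by simp), Finset.sum_insert (by simp)]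
    rw [hA0]
    simp only [pow_zero, pow_one, map_zero, mul_zero, zero_add]
    rw [hGQ, Finset.mul_sum]
    congr 1
    refine Finset.sum_congr rfl fun s hs => ?_
    have h2 : 2 ≤ s := (Finset.mem_Icc.mp hs).1
    rw [← mul_assoc, ← pow_add]
    congr 2
    omega
  set q0 : ℂ := fal (B - 2) n2 with hq0
  have hQP0 : QP.eval 0 = q0 := by
    rw [hQP, Polynomial.eval_prod, hq0, fal]
    exact Finset.prod_congr rfl fun j _ => by
      rw [Polynomial.eval_add, Polynomial.eval_X, Polynomial.eval_C, zero_add]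
  have hA1q : A 1 = (B - 1) * q0 := by
    rw [hA1, hq0, fal_succ']
    congr 1
    ring_nf
  obtain ⟨R, hR⟩ : (Polynomial.X : Polynomial ℂ) ∣ (QP - Polynomial.C q0) := by
    rw [Polynomial.X_dvd_iff, Polynomial.coeff_sub, Polynomial.coeff_C,
      Polynomial.coeff_zero_eq_eval_zero, hQP0]
    simp
  have hGQeq : GQ = QP + Polynomial.C (B - 1) * R := by
    have hX2 : (Polynomial.X : Polynomial ℂ) ^ 2 ≠ 0 := pow_ne_zero 2 Polynomial.X_ne_zero
    refine mul_left_cancel₀ hX2 ?_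
    have : Polynomial.X ^ 2 * GQ = FP - Polynomial.X * Polynomial.C (A 1) := by
      rw [hFPsplit]; ring
    rw [this, hFG, hGPsplit, hA1q]
    have hQR : QP = Polynomial.C q0 + Polynomial.X * R := by
      rw [← hR]; ring
    calc Polynomial.X * (QP * (Polynomial.X + Polynomial.C (B - 1)))
        - Polynomial.X * Polynomial.C ((B - 1) * q0)
        = Polynomial.X * Polynomial.X * QP
          + Polynomial.X * Polynomial.C (B - 1) * (QP - Polynomial.C q0) := by
          rw [map_mul]; ring
      _ = Polynomial.X ^ 2 * (QP + Polynomial.C (B - 1) * R) := by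
          rw [hR]; ring
  -- evaluate at 1 - B
  set u : ℂ := 1 - B with hu
  have hGQu : GQ.eval u = q0 := by
    have hRu := congrArg (Polynomial.eval u) hR
    rw [Polynomial.eval_mul, Polynomial.eval_X, Polynomial.eval_sub, Polynomial.eval_C] at hRu
    have := congrArg (Polynomial.eval u) hGQeq
    rw [Polynomial.eval_add, Polynomial.eval_mul, Polynomial.eval_C] at this
    rw [this]
    have : (B - 1) * Polynomial.eval u R = q0 - QP.eval u := by
      have : u * Polynomial.eval u R = QP.eval u - q0 := hRu.symm
      rw [hu] at this
      linear_combination -this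
    rw [this]
    ring
  have hGQu' : GQ.eval u = ∑ s ∈ Finset.Icc 2 (n2 + 2), u ^ (s - 2) * A s := by
    rw [hGQ, Polynomial.eval_finset_sum]
    exact Finset.sum_congr rfl fun s _ => by
      rw [Polynomial.eval_mul, Polynomial.eval_pow, Polynomial.eval_X, Polynomial.eval_C]
  -- final computation
  have hterm : ∀ s ∈ Finset.Icc 2 (n2 + 2),
      (-1 : ℂ) ^ (s - 1) * (B - 1) ^ (s - 2) * A s = -(u ^ (s - 2) * A s) := by
    intro s hs
    have h2 : 2 ≤ s := (Finset.mem_Icc.mp hs).1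
    obtain ⟨r, hr⟩ : ∃ r, s - 2 = r := ⟨s - 2, rfl⟩
    have hr1 : s - 1 = r + 1 := by omega
    rw [hr, hr1, hu]
    have : ((1 : ℂ) - B) = (-1) * (B - 1) := by ring
    rw [this, mul_pow, pow_succ]
    ring
  have hgoal : fal (B - 2) n2
      + ∑ s ∈ Finset.Icc 2 (n2 + 2), (-1 : ℂ) ^ (s - 1) * (B - 1) ^ (s - 2)
          * ∑ P ∈ partitionsInto (n2 + 2) s, ∏ J ∈ P, wB b J = 0 := by
    show fal (B - 2) n2
      + ∑ s ∈ Finset.Icc 2 (n2 + 2), (-1 : ℂ) ^ (s - 1) * (B - 1) ^ (s - 2) * A s = 0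
    rw [Finset.sum_congr rfl hterm, Finset.sum_neg_distrib, ← hGQu', hGQu, hq0]
    ring
  have hrange : n2 + 2 - 2 = n2 := by omega
  rw [hrange]
  exact hgoal
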